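/- Let d ≥ 1, 1 < p < ∞ with conjugate exponent q = p/(p−1), and let 0 ≤ l < k < ∞. Set r := (k + d(p−1)/p) / (l + (k−l)/p + d(p−1)/p). There exists a constant C = C(k,l,p,d) > 0 such that for every measurable α : ℝ^d_x × ℝ^d_v → ℂ with α ∈ L^{2p}(ℝ^{2d}) and finite k-th velocity moment M_k(α) := ∫∫ |v|^k |α(x,v)|² dv dx, the l-th local velocity moment m_l(α)(x) := ∫ |v|^l |α(x,v)|² dv satisfies ‖m_l(α)‖_{L^r(ℝ^d_x)} ≤ C ‖α‖_{L^{2p}(ℝ^{2d})}^{2p(k−l)/(pk+(p−1)d)} · M_k(α)^{(lp+d(p−1))/(pk+(p−1)d)}. -/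

import Mathlib

/-!
Fix `x` and put `g = |α(x, ·)|²`, `q = p / (p - 1)`. Split `∫ |v|^l g` at a radius `R`:
Hölder bounds the part on the ball by `R^(l + d/q) |B₁|^(1/q) ‖g‖_p`, and
`|v|^l ≤ R^(l-k) |v|^k` bounds the rest by `R^(l-k) m_k(x)`. Balancing the two terms in `R`
gives `m_l(x) ≲ ‖g‖_p^θ m_k(x)^(1-θ)` with `θ = (k - l)/(k + d/q)`. After raising to the power
`r`, the exponents of `∫ |α(x, ·)|^(2p)` and of `m_k(x)` add up to `1`, so Hölder in `x` and
Tonelli finish the proof.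
-/

open MeasureTheory
open scoped ENNReal NNReal

/-- `ℝ^d` as a Euclidean space. -/
abbrev E (d : ℕ) : Type := EuclideanSpace ℝ (Fin d)

open Metric Module

theorem ENNReal.le_two_mul_rpow_mul_rpow_of_forall_le {X A B : ℝ≥0∞} {a b : ℝ}
    (ha : 0 < a) (hb : 0 < b) (hA : A ≠ 0) (hB : B ≠ 0)
    (h : ∀ R : ℝ≥0, 0 < R → X ≤ (R : ℝ≥0∞) ^ a * A + (R : ℝ≥0∞) ^ (-b) * B) :
    X ≤ 2 * A ^ (b / (a + b)) * B ^ (a / (a + b)) := by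
  have hab : 0 < a + b := by linarith
  have hθa : 0 < a / (a + b) := div_pos ha hab
  have hθb : 0 < b / (a + b) := div_pos hb hab
  rcases eq_or_ne A ⊤ with rfl | hA'
  · simp [top_rpow_of_pos hθb, mul_top, rpow_eq_zero_iff, hB, hθa.not_gt]
  rcases eq_or_ne B ⊤ with rfl | hB'
  · simp [top_rpow_of_pos hθa, mul_top, rpow_eq_zero_iff, hA, hθb.not_gt]
  -- at the radius `ρ` with `ρ ^ (a + b) = B / A` both terms are `A ^ (b/(a+b)) * B ^ (a/(a+b))`
  set ρ : ℝ≥0∞ := (B / A) ^ (1 / (a + b))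
  have hρ : ρ ≠ ⊤ := rpow_ne_top_of_nonneg (by positivity) (div_ne_top hB' hA)
  have hρ0 : 0 < ρ.toNNReal :=
    toNNReal_pos (rpow_pos (ENNReal.div_pos hB hA') (div_ne_top hB' hA)).ne' hρ
  have div_rpow_mul {x y : ℝ≥0∞} {t : ℝ} (hx : x ≠ 0) (hx' : x ≠ ⊤) (ht : 0 ≤ t) :
      (y / x) ^ t * x = y ^ t * x ^ (1 - t) := by
    rw [div_rpow_of_nonneg _ _ ht, rpow_sub _ _ hx hx', rpow_one, div_eq_mul_inv,
      div_eq_mul_inv, mul_assoc, mul_comm _ x]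
  have h₁ : ρ ^ a * A = A ^ (b / (a + b)) * B ^ (a / (a + b)) := by
    rw [← rpow_mul, div_rpow_mul hA hA' (by positivity), mul_comm]
    congr 2 <;> field_simp; ring
  have h₂ : ρ ^ (-b) * B = A ^ (b / (a + b)) * B ^ (a / (a + b)) := by
    rw [← rpow_mul, show 1 / (a + b) * -b = -(b / (a + b)) by ring, rpow_neg, ← inv_rpow,
      ENNReal.inv_div (Or.inl hA') (Or.inl hA), div_rpow_mul hB hB' hθb.le]
    congr 2; field_simp; ring
  calc X ≤ (ρ.toNNReal : ℝ≥0∞) ^ a * A + (ρ.toNNReal : ℝ≥0∞) ^ (-b) * B := h _ hρ0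
    _ = 2 * A ^ (b / (a + b)) * B ^ (a / (a + b)) := by
      rw [coe_toNNReal hρ, h₁, h₂, ← two_mul, mul_assoc]

theorem lintegral_rpow_le_of_le_mul_rpow_mul_rpow {X : Type*} [MeasurableSpace X]
    {ν : Measure X} {h f g : X → ℝ≥0∞} (hf : AEMeasurable f ν) (hg : AEMeasurable g ν)
    {K : ℝ≥0∞} {r s t : ℝ} (hr : 0 < r) (hs : 0 ≤ s) (ht : 0 ≤ t) (hrst : r * (s + t) = 1)
    (hle : ∀ x, h x ≤ K * f x ^ s * g x ^ t) :
    (∫⁻ x, h x ^ r ∂ν) ^ (1 / r) ≤ K * (∫⁻ x, f x ∂ν) ^ s * (∫⁻ x, g x ∂ν) ^ t := by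
  have rpow_mul_rpow_one_div (x : ℝ≥0∞) (c : ℝ) : (x ^ (c * r)) ^ (1 / r) = x ^ c := by
    rw [← ENNReal.rpow_mul]; field_simp
  have key : ∫⁻ x, h x ^ r ∂ν ≤
      K ^ r * ((∫⁻ x, f x ∂ν) ^ (s * r) * (∫⁻ x, g x ∂ν) ^ (t * r)) :=
    calc ∫⁻ x, h x ^ r ∂ν ≤ ∫⁻ x, K ^ r * (f x ^ (s * r) * g x ^ (t * r)) ∂ν := by
          refine lintegral_mono fun x => (ENNReal.rpow_le_rpow (hle x) hr.le).trans_eq ?_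
          rw [ENNReal.mul_rpow_of_nonneg _ _ hr.le, ENNReal.mul_rpow_of_nonneg _ _ hr.le,
            ← ENNReal.rpow_mul, ← ENNReal.rpow_mul, mul_assoc]
      _ = K ^ r * ∫⁻ x, f x ^ (s * r) * g x ^ (t * r) ∂ν :=
          lintegral_const_mul'' _ (by fun_prop)
      _ ≤ K ^ r * ((∫⁻ x, f x ∂ν) ^ (s * r) * (∫⁻ x, g x ∂ν) ^ (t * r)) := by
          gcongr
          exact ENNReal.lintegral_mul_norm_pow_le hf hg (by positivity) (by positivity)
            (by linarith)
  calc (∫⁻ x, h x ^ r ∂ν) ^ (1 / r)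
      ≤ (K ^ r * ((∫⁻ x, f x ∂ν) ^ (s * r) * (∫⁻ x, g x ∂ν) ^ (t * r))) ^ (1 / r) :=
        ENNReal.rpow_le_rpow key (by positivity)
    _ = K * (∫⁻ x, f x ∂ν) ^ s * (∫⁻ x, g x ∂ν) ^ t := by
        rw [ENNReal.mul_rpow_of_nonneg _ _ (by positivity),
          ENNReal.mul_rpow_of_nonneg _ _ (by positivity), rpow_mul_rpow_one_div,
          rpow_mul_rpow_one_div, ← ENNReal.rpow_mul, mul_one_div_cancel hr.ne',
          ENNReal.rpow_one, mul_assoc]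

section NormedGroup

variable {V : Type*} [NormedAddCommGroup V] [MeasurableSpace V] [OpensMeasurableSpace V]
  (μ : Measure V)

theorem setLIntegral_compl_ball_rpow_enorm_mul_le {l k : ℝ} (hlk : l ≤ k) (g : V → ℝ≥0∞)
    {R : ℝ≥0} (hR : 0 < R) :
    ∫⁻ v in (ball 0 R)ᶜ, ‖v‖ₑ ^ l * g v ∂μ ≤
      (R : ℝ≥0∞) ^ (-(k - l)) * ∫⁻ v, ‖v‖ₑ ^ k * g v ∂μ := by
  have hR0 : (R : ℝ≥0∞) ≠ 0 := by simpa using hR.ne'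
  calc ∫⁻ v in (ball 0 R)ᶜ, ‖v‖ₑ ^ l * g v ∂μ
      ≤ ∫⁻ v in (ball 0 R)ᶜ, (R : ℝ≥0∞) ^ (-(k - l)) * (‖v‖ₑ ^ k * g v) ∂μ := by
        refine setLIntegral_mono' measurableSet_ball.compl fun v hv => ?_
        have hRv : (R : ℝ≥0∞) ≤ ‖v‖ₑ := by
          rw [← ofReal_norm, ← ENNReal.ofReal_coe_nnreal]
          exact ENNReal.ofReal_le_ofReal (by simpa using hv)
        have hv0 : ‖v‖ₑ ≠ 0 := (hR0.bot_lt.trans_le hRv).ne'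
        calc ‖v‖ₑ ^ l * g v
            = (R : ℝ≥0∞) ^ (-(k - l)) * (R : ℝ≥0∞) ^ (k - l) * ‖v‖ₑ ^ l * g v := by
              rw [← ENNReal.rpow_add _ _ hR0 ENNReal.coe_ne_top, neg_add_cancel,
                ENNReal.rpow_zero, one_mul]
          _ ≤ (R : ℝ≥0∞) ^ (-(k - l)) * ‖v‖ₑ ^ (k - l) * ‖v‖ₑ ^ l * g v := by
              gcongr
          _ = (R : ℝ≥0∞) ^ (-(k - l)) * (‖v‖ₑ ^ k * g v) := by
              rw [mul_assoc _ (‖v‖ₑ ^ (k - l)), ← ENNReal.rpow_add _ _ hv0 enorm_ne_top,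
                sub_add_cancel, mul_assoc]
    _ ≤ (R : ℝ≥0∞) ^ (-(k - l)) * ∫⁻ v, ‖v‖ₑ ^ k * g v ∂μ := by
        rw [lintegral_const_mul' _ _ (ENNReal.rpow_ne_top_of_ne_zero hR0 ENNReal.coe_ne_top)]
        gcongr
        exact Measure.restrict_le_self

end NormedGroup

section AddHaar

variable {V : Type*} [NormedAddCommGroup V] [NormedSpace ℝ V] [FiniteDimensional ℝ V]
  [MeasurableSpace V] [BorelSpace V] (μ : Measure V) [μ.IsAddHaarMeasure]

theorem setLIntegral_ball_rpow_enorm_mul_le {p q l : ℝ} (hpq : p.HolderConjugate q)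
    (hl : 0 ≤ l) {g : V → ℝ≥0∞} (hg : AEMeasurable g μ) {R : ℝ≥0} (hR : 0 < R) :
    ∫⁻ v in ball 0 R, ‖v‖ₑ ^ l * g v ∂μ ≤
      (R : ℝ≥0∞) ^ (l + finrank ℝ V / q) * μ (ball 0 1) ^ (1 / q) *
        (∫⁻ v, g v ^ p ∂μ) ^ (1 / p) := by
  have hR0 : (R : ℝ≥0∞) ≠ 0 := by simpa using hR.ne'
  have hq := hpq.symm.pos
  have hball : μ (ball 0 R) = (R : ℝ≥0∞) ^ (finrank ℝ V : ℝ) * μ (ball 0 1) := by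
    rw [Measure.addHaar_ball_of_pos μ _ (by exact_mod_cast hR)]
    simp
  calc ∫⁻ v in ball 0 R, ‖v‖ₑ ^ l * g v ∂μ
      ≤ (∫⁻ v in ball 0 R, (‖v‖ₑ ^ l) ^ q ∂μ) ^ (1 / q) *
          (∫⁻ v in ball 0 R, g v ^ p ∂μ) ^ (1 / p) :=
        ENNReal.lintegral_mul_le_Lp_mul_Lq _ hpq.symm (f := fun v => ‖v‖ₑ ^ l) (by fun_prop)
          hg.restrict
    _ ≤ (∫⁻ _ in ball (0 : V) R, (R : ℝ≥0∞) ^ (l * q) ∂μ) ^ (1 / q) *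
          (∫⁻ v, g v ^ p ∂μ) ^ (1 / p) := by
        refine mul_le_mul' (ENNReal.rpow_le_rpow ?_ (by positivity))
          (ENNReal.rpow_le_rpow (setLIntegral_le_lintegral _ _) hpq.one_div_nonneg)
        refine setLIntegral_mono' measurableSet_ball fun v hv => ?_
        rw [← ENNReal.rpow_mul]
        gcongr
        rw [← ofReal_norm, ← ENNReal.ofReal_coe_nnreal]
        exact ENNReal.ofReal_le_ofReal (mem_ball_zero_iff.1 hv).le
    _ = _ := by
        rw [setLIntegral_const, hball, ← mul_assoc,
          ← ENNReal.rpow_add _ _ hR0 ENNReal.coe_ne_top,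
          ENNReal.mul_rpow_of_nonneg _ _ (by positivity), ← ENNReal.rpow_mul]
        congr 3
        field_simp

theorem lintegral_rpow_enorm_mul_le [Nontrivial V] {p q l k : ℝ} (hpq : p.HolderConjugate q)
    (hl : 0 ≤ l) (hlk : l < k) {g : V → ℝ≥0∞} (hg : AEMeasurable g μ) :
    ∫⁻ v, ‖v‖ₑ ^ l * g v ∂μ ≤
      2 * (μ (ball 0 1) ^ (1 / q) * (∫⁻ v, g v ^ p ∂μ) ^ (1 / p)) ^
          ((k - l) / (k + finrank ℝ V / q)) *
        (∫⁻ v, ‖v‖ₑ ^ k * g v ∂μ) ^ ((l + finrank ℝ V / q) / (k + finrank ℝ V / q)) := by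
  have hq := hpq.symm.pos
  have hn : (0 : ℝ) < finrank ℝ V := mod_cast finrank_pos
  have of_ae_eq_zero (h : g =ᵐ[μ] 0) : ∫⁻ v, ‖v‖ₑ ^ l * g v ∂μ = 0 :=
    calc ∫⁻ v, ‖v‖ₑ ^ l * g v ∂μ = ∫⁻ _, 0 ∂μ :=
          lintegral_congr_ae (h.mono fun v hv => by simp [hv])
      _ = 0 := lintegral_zero
  rcases eq_or_ne (∫⁻ v, g v ^ p ∂μ) 0 with hI | hI
  · refine (of_ae_eq_zero ?_).trans_le zero_le
    filter_upwards [(lintegral_eq_zero_iff' (hg.pow_const p)).1 hI] with v hv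
    exact (ENNReal.rpow_eq_zero_iff_of_pos hpq.pos).1 hv
  rcases eq_or_ne (∫⁻ v, ‖v‖ₑ ^ k * g v ∂μ) 0 with hB | hB
  · refine (of_ae_eq_zero ?_).trans_le zero_le
    filter_upwards [(lintegral_eq_zero_iff' (by fun_prop)).1 hB, μ.ae_ne 0] with v hv hv0
    have : ‖v‖ₑ ^ k ≠ 0 := (ENNReal.rpow_pos (enorm_pos.2 hv0) enorm_ne_top).ne'
    simpa [this] using hv
  have hκ : μ (ball (0 : V) 1) ^ (1 / q) ≠ 0 :=
    (ENNReal.rpow_pos (measure_ball_pos μ 0 one_pos) measure_ball_lt_top.ne).ne'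
  have hA : μ (ball (0 : V) 1) ^ (1 / q) * (∫⁻ v, g v ^ p ∂μ) ^ (1 / p) ≠ 0 :=
    mul_ne_zero hκ ((ENNReal.rpow_eq_zero_iff_of_pos hpq.one_div_pos).not.2 hI)
  have split (R : ℝ≥0) (hR : 0 < R) : ∫⁻ v, ‖v‖ₑ ^ l * g v ∂μ ≤
      (R : ℝ≥0∞) ^ (l + finrank ℝ V / q) *
          (μ (ball 0 1) ^ (1 / q) * (∫⁻ v, g v ^ p ∂μ) ^ (1 / p)) +
        (R : ℝ≥0∞) ^ (-(k - l)) * ∫⁻ v, ‖v‖ₑ ^ k * g v ∂μ := by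
    rw [← lintegral_add_compl _ (measurableSet_ball (x := 0) (ε := R)), ← mul_assoc]
    exact add_le_add (setLIntegral_ball_rpow_enorm_mul_le μ hpq hl hg hR)
      (setLIntegral_compl_ball_rpow_enorm_mul_le μ hlk.le g hR)
  convert ENNReal.le_two_mul_rpow_mul_rpow_of_forall_le (by positivity) (by linarith) hA hB split
    using 3 <;> ring_nf

theorem lintegral_rpow_lintegral_rpow_enorm_mul_le [Nontrivial V] {X : Type*}
    [MeasurableSpace X] (ν : Measure X) [SFinite ν] {p l k r : ℝ} (hp : 1 < p) (hl : 0 ≤ l)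
    (hlk : l < k)
    (hr : r = (k + finrank ℝ V * (p - 1) / p) / (l + (k - l) / p + finrank ℝ V * (p - 1) / p))
    {G : X × V → ℝ≥0∞} (hG : Measurable G) :
    (∫⁻ x, (∫⁻ v, ‖v‖ₑ ^ l * G (x, v) ∂μ) ^ r ∂ν) ^ (1 / r) ≤
      2 * μ (ball 0 1) ^ ((p - 1) * (k - l) / (p * k + (p - 1) * finrank ℝ V)) *
        (∫⁻ z, G z ^ p ∂ν.prod μ) ^ ((k - l) / (p * k + (p - 1) * finrank ℝ V)) *
        (∫⁻ z, ‖z.2‖ₑ ^ k * G z ∂ν.prod μ) ^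
          ((l * p + finrank ℝ V * (p - 1)) / (p * k + (p - 1) * finrank ℝ V)) := by
  set n : ℝ := (finrank ℝ V : ℝ)
  have hn : 0 < n := by simp only [n]; exact_mod_cast finrank_pos
  have hp0 : 0 < p := by linarith
  have hp1 : 0 < p - 1 := by linarith
  have hpq : p.HolderConjugate (p / (p - 1)) :=
    (Real.holderConjugate_iff_eq_conjExponent hp).2 rfl
  have hden : 0 < p * k + (p - 1) * n := by nlinarith
  have hnum : 0 < p * l + (k - l) + (p - 1) * n := by nlinarith
  replace hr : r = (p * k + (p - 1) * n) / (p * l + (k - l) + (p - 1) * n) := by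
    rw [hr]; field_simp
  rw [lintegral_prod _ (by fun_prop), lintegral_prod _ (by fun_prop)]
  refine lintegral_rpow_le_of_le_mul_rpow_mul_rpow (by fun_prop) (by fun_prop)
    (by rw [hr]; exact div_pos hden hnum) (div_nonneg (by linarith) hden.le)
    (div_nonneg (by positivity) hden.le) (by rw [hr]; field_simp; ring) fun x => ?_
  refine (lintegral_rpow_enorm_mul_le μ hpq hl hlk
    (hG.comp measurable_prodMk_left).aemeasurable).trans_eq ?_
  have e₁ : 1 / (p / (p - 1)) * ((k - l) / (k + n / (p / (p - 1)))) =
      (p - 1) * (k - l) / (p * k + (p - 1) * n) := by field_simp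
  have e₂ : 1 / p * ((k - l) / (k + n / (p / (p - 1)))) = (k - l) / (p * k + (p - 1) * n) := by
    field_simp
  have e₃ : (l + n / (p / (p - 1))) / (k + n / (p / (p - 1))) =
      (l * p + n * (p - 1)) / (p * k + (p - 1) * n) := by field_simp
  have hθ : 0 ≤ (k - l) / (k + n / (p / (p - 1))) :=
    div_nonneg (by linarith) (by linarith [div_nonneg hn.le (div_pos hp0 hp1).le])
  rw [ENNReal.mul_rpow_of_nonneg _ _ hθ, ← ENNReal.rpow_mul, ← ENNReal.rpow_mul, e₁, e₂, e₃]
  simp only [mul_assoc]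
  rfl

end AddHaar

theorem ENNReal.ofReal_norm_rpow_mul_norm_sq {F₁ F₂ : Type*} [SeminormedAddGroup F₁]
    [SeminormedAddGroup F₂] (x : F₁) (y : F₂) {s : ℝ} (hs : 0 ≤ s) :
    ENNReal.ofReal (‖x‖ ^ s * ‖y‖ ^ 2) = ‖x‖ₑ ^ s * ‖y‖ₑ ^ 2 := by
  rw [ENNReal.ofReal_mul (by positivity), ENNReal.ofReal_pow (norm_nonneg _),
    ← ENNReal.ofReal_rpow_of_nonneg (norm_nonneg _) hs, ofReal_norm, ofReal_norm]

theorem eLpNorm_ofReal_two_mul_rpow {α F : Type*} [MeasurableSpace α] {μ : Measure α}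
    [SeminormedAddGroup F] (f : α → F) {p : ℝ} (hp : 0 < p) (s : ℝ) :
    eLpNorm f (ENNReal.ofReal (2 * p)) μ ^ (2 * p * s) = (∫⁻ x, (‖f x‖ₑ ^ 2) ^ p ∂μ) ^ s := by
  rw [eLpNorm_eq_lintegral_rpow_enorm_toReal (by simpa using hp) ENNReal.ofReal_ne_top,
    ENNReal.toReal_ofReal (by positivity), ← ENNReal.rpow_mul,
    show 1 / (2 * p) * (2 * p * s) = s by field_simp]
  congr 2 with x
  rw [← ENNReal.rpow_natCast, ← ENNReal.rpow_mul, Nat.cast_ofNat]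

theorem statement9 (d : ℕ) (hd : 1 ≤ d) (p : ℝ) (hp : 1 < p)
    (l k : ℝ) (hl : 0 ≤ l) (hlk : l < k)
    (r : ℝ) (hr : r = (k + d * (p - 1) / p) / (l + (k - l) / p + d * (p - 1) / p)) :
    ∃ C > 0, ∀ α : E d × E d → ℂ, Measurable α →
      MemLp α (ENNReal.ofReal (2 * p)) volume →
      (∫⁻ z : E d × E d, ENNReal.ofReal (‖z.2‖ ^ k * ‖α z‖ ^ 2)) < ⊤ →
      (∫⁻ x : E d, (∫⁻ v : E d, ENNReal.ofReal (‖v‖ ^ l * ‖α (x, v)‖ ^ 2)) ^ r) ^ (1 / r) ≤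
        ENNReal.ofReal C *
          eLpNorm α (ENNReal.ofReal (2 * p)) volume ^
            (2 * p * (k - l) / (p * k + (p - 1) * d)) *
          (∫⁻ z : E d × E d, ENNReal.ofReal (‖z.2‖ ^ k * ‖α z‖ ^ 2)) ^
            ((l * p + d * (p - 1)) / (p * k + (p - 1) * d)) := by
  have : Nonempty (Fin d) := ⟨⟨0, hd⟩⟩
  have hκ : 0 < volume (ball (0 : E d) 1) := measure_ball_pos _ _ one_pos
  set C : ℝ≥0∞ := 2 * volume (ball (0 : E d) 1) ^ ((p - 1) * (k - l) / (p * k + (p - 1) * d))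
  have hC : C ≠ ⊤ := ENNReal.mul_ne_top ENNReal.ofNat_ne_top
    (ENNReal.rpow_ne_top_of_ne_zero hκ.ne' measure_ball_lt_top.ne)
  have hC0 : C ≠ 0 := mul_ne_zero two_ne_zero (ENNReal.rpow_pos hκ measure_ball_lt_top.ne).ne'
  refine ⟨C.toReal, ENNReal.toReal_pos hC0 hC, fun α hα _ _ => ?_⟩
  have key := lintegral_rpow_lintegral_rpow_enorm_mul_le volume volume hp hl hlk (r := r)
    (by rwa [finrank_euclideanSpace_fin]) (G := fun z => ‖α z‖ₑ ^ 2) (by fun_prop)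
  rw [finrank_euclideanSpace_fin, ← Measure.volume_eq_prod] at key
  simp only [ENNReal.ofReal_norm_rpow_mul_norm_sq _ _ hl,
    ENNReal.ofReal_norm_rpow_mul_norm_sq _ _ (hl.trans hlk.le), ENNReal.ofReal_toReal hC,
    mul_div_assoc, eLpNorm_ofReal_two_mul_rpow α (by linarith : 0 < p)]
  exact key
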